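/- arXiv:1302.2675 — 5 statements merged into one kernel-verified Lean document; each statement's English description precedes it below -/
import Mathlib

section
/- If a run DAG G of a nondeterministic Büchi automaton on an infinite word admits an odd ranking, then G contains no accepting path (i.e., G is rejecting). -/
/-- Strict lexicographic order on finite 0-1 profiles. -/
def ProfLt (a b : List Bool) : Prop := List.Lex (· < ·) a b

/-- Non-strict lexicographic order on finite 0-1 profiles. -/
def ProfLe (a b : List Bool) : Prop := a = b ∨ ProfLt a b

/-- A nondeterministic Büchi automaton on infinite words. -/
structure NBW (Q : Type) (σ : Type) where
  init : Set Q
  trans : Q → σ → Set Q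
  acc : Q → Bool

namespace NBW

variable {Q σ : Type} (A : NBW Q σ) (w : ℕ → σ)

/-- `(q,i)` is a vertex of the run DAG of `A` on `w`. -/
def InDag (v : Q × ℕ) : Prop :=
  ∃ p : ℕ → Q, p 0 ∈ A.init ∧ (∀ j, j < v.2 → p (j + 1) ∈ A.trans (p j) (w j)) ∧ p v.2 = v.1

/-- Edge of the run DAG. -/
def Edge (u v : Q × ℕ) : Prop :=
  A.InDag w u ∧ v.2 = u.2 + 1 ∧ v.1 ∈ A.trans u.1 (w u.2)

/-- An infinite initial path through the (sub-)DAG with edge relation `E`. -/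
def IsPath (E : Q × ℕ → Q × ℕ → Prop) (π : ℕ → Q × ℕ) : Prop :=
  (π 0).1 ∈ A.init ∧ (π 0).2 = 0 ∧ ∀ i, E (π i) (π (i + 1))

/-- An accepting path: initial and visiting F-nodes infinitely often. -/
def AcceptingPath (E : Q × ℕ → Q × ℕ → Prop) (π : ℕ → Q × ℕ) : Prop :=
  A.IsPath E π ∧ ∀ N, ∃ i, N ≤ i ∧ A.acc (π i).1 = true

/-- Profile (sequence of acceptance labels) of the first `i+1` states of `p`. -/
def profileOf (p : ℕ → Q) (i : ℕ) : List Bool :=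
  (List.range (i + 1)).map fun j => A.acc (p j)

/-- `p` encodes a finite initial run ending at node `v`. -/
def FinRunTo (p : ℕ → Q) (v : Q × ℕ) : Prop :=
  p 0 ∈ A.init ∧ (∀ j, j < v.2 → p (j + 1) ∈ A.trans (p j) (w j)) ∧ p v.2 = v.1

/-- `h` assigns to each node the lexicographically maximal profile
over all finite initial runs to it. -/
def IsProfileFun (h : Q × ℕ → List Bool) : Prop :=
  ∀ v, A.InDag w v →
    (∃ p, A.FinRunTo w p v ∧ A.profileOf p v.2 = h v) ∧
    ∀ p, A.FinRunTo w p v → ProfLe (A.profileOf p v.2) (h v)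

/-- Edges of the pruned DAG `G'`: only edges from predecessors of
lexicographically maximal profile are kept. -/
def Edge' (h : Q × ℕ → List Bool) (u v : Q × ℕ) : Prop :=
  A.Edge w u v ∧ ∀ u', A.Edge w u' v → ¬ ProfLt (h u) (h u')

/-- `v` is finite in `G'`: it has finitely many descendants in `G'`. -/
def FiniteIn' (h : Q × ℕ → List Bool) (v : Q × ℕ) : Prop :=
  Set.Finite {u | Relation.ReflTransGen (A.Edge' w h) v u}

/-- Vertices of `G''`: vertices of the run DAG that are not finite in `G'`. -/
def InDag'' (h : Q × ℕ → List Bool) (v : Q × ℕ) : Prop :=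
  A.InDag w v ∧ ¬ A.FiniteIn' w h v

/-- Edges of `G''`. -/
def Edge'' (h : Q × ℕ → List Bool) (u v : Q × ℕ) : Prop :=
  A.Edge' w h u v ∧ A.InDag'' w h u ∧ A.InDag'' w h v

/-- `lam` is the retrospective labeling `λ^k`: ⊤ at levels ≤ k, ⊥ on F-nodes
after level k, inherited along `G'`-edges otherwise. -/
def IsRetroLabeling (h : Q × ℕ → List Bool) (k : ℕ) (lam : Q × ℕ → Bool) : Prop :=
  (∀ u, A.InDag w u → u.2 ≤ k → lam u = true) ∧
  (∀ u, A.InDag w u → k < u.2 → A.acc u.1 = true → lam u = false) ∧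
  (∀ u v, k < v.2 → A.acc v.1 = false → A.Edge' w h u v → lam v = lam u)

/-- A labeling is legal when every ⊥-labeled node is finite in `G'`. -/
def Legal (h : Q × ℕ → List Bool) (lam : Q × ℕ → Bool) : Prop :=
  ∀ u, A.InDag w u → lam u = false → A.FiniteIn' w h u

/-- `α(u)`: the number of ⊤-labeled profile-equivalence classes on `u`'s level
whose profile is strictly greater than `h u`. -/
noncomputable def alphaCount (h : Q × ℕ → List Bool) (lam : Q × ℕ → Bool) (u : Q × ℕ) : ℕ :=
  Set.ncard {p : List Bool | ∃ v, A.InDag w v ∧ v.2 = u.2 ∧ lam v = true ∧ h v = p ∧ ProfLt (h u) p}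

/-- The `k`-retrospective ranking (with top rank `m`). -/
noncomputable def retroRank (h : Q × ℕ → List Bool) (lam : Q × ℕ → Bool) (k m : ℕ)
    (u : Q × ℕ) : ℕ :=
  if u.2 ≤ k then m
  else if lam u then 2 * A.alphaCount w h lam u + 1 else 2 * A.alphaCount w h lam u

/-- `m = 2 |Q \ F|`. -/
def mBound [Fintype Q] : ℕ :=
  2 * Finset.card (Finset.univ.filter fun q => A.acc q = false)

end NBW

theorem stmt0_general {Q σ : Type} (A : NBW Q σ) (w : ℕ → σ) (r : Q × ℕ → ℕ)
    (hF : ∀ v, A.InDag w v → A.acc v.1 = true → Even (r v))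
    (hodd : ∀ π : ℕ → Q × ℕ, A.IsPath (A.Edge w) π →
      ∃ N, Odd (r (π N)) ∧ ∀ i, N ≤ i → r (π i) = r (π N)) :
    ¬ ∃ π : ℕ → Q × ℕ, A.AcceptingPath (A.Edge w) π := by
  rintro ⟨π, hpath, hinf⟩
  obtain ⟨N, hoddN, hstable⟩ := hodd π hpath
  obtain ⟨i, hNi, hacc⟩ := hinf N
  have heven : Even (r (π i)) := hF (π i) (hpath.2.2 i).1 hacc
  exact Nat.not_even_iff_odd.mpr hoddN (hstable i hNi ▸ heven)

/-- If a run DAG admits an odd ranking, then it has no accepting path. -/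
theorem stmt0 {Q σ : Type} (A : NBW Q σ) (w : ℕ → σ) (r : Q × ℕ → ℕ)
    (hF : ∀ v, A.InDag w v → A.acc v.1 = true → Even (r v))
    (hmono : ∀ u v, A.Edge w u v → r v ≤ r u)
    (hodd : ∀ π : ℕ → Q × ℕ, A.IsPath (A.Edge w) π →
      ∃ N, Odd (r (π N)) ∧ ∀ i, N ≤ i → r (π i) = r (π N)) :
    ¬ ∃ π : ℕ → Q × ℕ, A.AcceptingPath (A.Edge w) π :=
  stmt0_general A w r hF hodd
end

section
/- In G', if two nodes join (share a common child), then they have equal profiles: for edges (u,v) and (u',v) in G', h_u = h_{u'}. -/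
theorem eq_of_not_profLt_of_not_profLt {a b : List Bool} (hab : ¬ ProfLt a b)
    (hba : ¬ ProfLt b a) : a = b :=
  le_antisymm (not_lt.mp hba) (not_lt.mp hab)

theorem stmt3_general {Q σ : Type} (A : NBW Q σ) (w : ℕ → σ) (h : Q × ℕ → List Bool)
    (u u' v : Q × ℕ)
    (huv : A.Edge' w h u v) (hu'v : A.Edge' w h u' v) :
    h u = h u' :=
  eq_of_not_profLt_of_not_profLt (huv.2 u' hu'v.1) (hu'v.2 u huv.1)

/-- nodes that join in `G'` have equal profiles. -/
theorem stmt3 {Q σ : Type} (A : NBW Q σ) (w : ℕ → σ) (h : Q × ℕ → List Bool)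
    (hprof : A.IsProfileFun w h) (u u' v : Q × ℕ)
    (huv : A.Edge' w h u v) (hu'v : A.Edge' w h u' v) :
    h u = h u' :=
  stmt3_general A w h u u' v huv hu'v
end

section
/- The profile preorder is preserved by G'-edges: for nodes u, v on level i and edges (u,u'), (v,v') in G', (1) if h_u < h_v then h_{u'} < h_{v'}; (2) if h_u = h_v and u', v' agree on being F-nodes then h_{u'} = h_{v'}; (3) if h_u = h_v, v' is an F-node and u' is not, then h_{u'} < h_{v'}. -/
/-!
Along a `G'`-edge `(u, u')` the profile of `u'` is the profile of `u` followed by the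
acceptance bit of `u'`: extending a maximal run to `u` gives `h u ++ [acc u'] ≤ h u'`, and
conversely a maximal run to `u'` passes through a predecessor `u''` of `u'`, whose profile is
at most `h u` because `G'` keeps only edges from predecessors of maximal profile. All three
claims then follow, since on lists of equal length lexicographic comparison is decided by the
common prefix before the last letter.
-/

theorem List.Lex.append_of_length_eq {α : Type*} {r : α → α → Prop} :
    ∀ {a b : List α} (s t : List α), a.length = b.length → List.Lex r a b →
      List.Lex r (a ++ s) (b ++ t)
  | [], [], _, _, _, hab => nomatch hab
  | _ :: _, _ :: _, _, _, _, .rel hr => .rel hr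
  | _ :: _, _ :: _, s, t, hlen, .cons hab =>
      .cons (append_of_length_eq s t (Nat.succ.inj hlen) hab)

section ListOrder

variable {α : Type*} [LinearOrder α] {a b : List α}

theorem List.append_lt_append_of_length_eq (hlen : a.length = b.length) (hab : a < b)
    (s t : List α) : a ++ s < b ++ t :=
  List.Lex.append_of_length_eq s t hlen hab

theorem List.append_le_append_of_length_eq (hlen : a.length = b.length) (hab : a ≤ b)
    (s : List α) : a ++ s ≤ b ++ s := by
  rcases hab.eq_or_lt with rfl | hlt
  · exact le_rfl
  · exact (List.append_lt_append_of_length_eq hlen hlt s s).le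

end ListOrder

theorem profLe_iff_le {a b : List Bool} : ProfLe a b ↔ a ≤ b := by
  rw [le_iff_eq_or_lt]
  rfl

namespace NBW

variable {Q σ : Type} (A : NBW Q σ) {w : ℕ → σ} {h : Q × ℕ → List Bool}

theorem profileOf_length (p : ℕ → Q) (i : ℕ) : (A.profileOf p i).length = i + 1 := by
  simp [profileOf]

theorem profileOf_succ (p : ℕ → Q) (i : ℕ) :
    A.profileOf p (i + 1) = A.profileOf p i ++ [A.acc (p (i + 1))] := by
  simp [profileOf, List.range_succ]

theorem profileOf_congr {p q : ℕ → Q} {i : ℕ} (hpq : ∀ j ≤ i, p j = q j) :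
    A.profileOf p i = A.profileOf q i :=
  List.map_congr_left fun j hj => by
    rw [hpq j (Nat.lt_succ_iff.mp (List.mem_range.mp hj))]

variable {A}

theorem FinRunTo.inDag {p : ℕ → Q} {v : Q × ℕ} (hp : A.FinRunTo w p v) : A.InDag w v :=
  ⟨p, hp⟩

theorem FinRunTo.snoc {p : ℕ → Q} {u u' : Q × ℕ} (hp : A.FinRunTo w p u)
    (hlev : u'.2 = u.2 + 1) (htr : u'.1 ∈ A.trans u.1 (w u.2)) :
    A.FinRunTo w (fun j => if j ≤ u.2 then p j else u'.1) u' := by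
  obtain ⟨hinit, hstep, hlast⟩ := hp
  refine ⟨by simpa using hinit, fun j hj => ?_, by simp [hlev]⟩
  rw [hlev] at hj
  rcases Nat.lt_succ_iff_lt_or_eq.mp hj with hj | rfl
  · simpa [hj.le, Nat.succ_le_of_lt hj] using hstep j hj
  · simpa [hlast] using htr

theorem FinRunTo.edge_penultimate {q : ℕ → Q} {u' : Q × ℕ} {n : ℕ} (hq : A.FinRunTo w q u')
    (hlev : u'.2 = n + 1) : A.Edge w (q n, n) u' := by
  obtain ⟨hinit, hstep, hlast⟩ := hq
  refine ⟨⟨q, hinit, fun j hj => hstep j (by omega), rfl⟩, hlev, ?_⟩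
  rw [← hlast, hlev]
  exact hstep n (by omega)

theorem IsProfileFun.profileOf_le (hprof : A.IsProfileFun w h) {p : ℕ → Q} {v : Q × ℕ}
    (hp : A.FinRunTo w p v) : A.profileOf p v.2 ≤ h v :=
  profLe_iff_le.mp ((hprof v hp.inDag).2 p hp)

theorem IsProfileFun.length_eq (hprof : A.IsProfileFun w h) {v : Q × ℕ}
    (hv : A.InDag w v) : (h v).length = v.2 + 1 := by
  obtain ⟨p, -, hp⟩ := (hprof v hv).1
  rw [← hp, profileOf_length]

theorem IsProfileFun.profile_eq_of_edge' (hprof : A.IsProfileFun w h) {u u' : Q × ℕ}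
    (hedge : A.Edge' w h u u') : h u' = h u ++ [A.acc u'.1] := by
  obtain ⟨⟨hu, hlev, htr⟩, hmax⟩ := hedge
  obtain ⟨p, hp, hpu⟩ := (hprof u hu).1
  obtain ⟨q, hq, hqu'⟩ := (hprof u' (hp.snoc hlev htr).inDag).1
  have hqlast : q (u.2 + 1) = u'.1 := hlev ▸ hq.2.2
  have hqu : A.profileOf q u.2 ≤ h u := calc
    A.profileOf q u.2 ≤ h (q u.2, u.2) :=
      hprof.profileOf_le (v := (q u.2, u.2)) ⟨hq.1, fun j hj => hq.2.1 j (by omega), rfl⟩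
    _ ≤ h u := not_lt.mp (hmax _ (hq.edge_penultimate hlev))
  apply le_antisymm
  · calc h u' = A.profileOf q u.2 ++ [A.acc u'.1] := by
          rw [← hqu', hlev, profileOf_succ, hqlast]
      _ ≤ h u ++ [A.acc u'.1] :=
          List.append_le_append_of_length_eq
            (by rw [profileOf_length, hprof.length_eq hu]) hqu _
  · calc h u ++ [A.acc u'.1]
        = A.profileOf (fun j => if j ≤ u.2 then p j else u'.1) (u.2 + 1) := by
          rw [profileOf_succ, profileOf_congr A fun j hj => if_pos hj, hpu]
          simp
      _ ≤ h u' := hlev ▸ hprof.profileOf_le (hp.snoc hlev htr)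

end NBW

/-- the profile preorder is preserved by `G'`-edges. -/
theorem stmt4 {Q σ : Type} (A : NBW Q σ) (w : ℕ → σ) (h : Q × ℕ → List Bool)
    (hprof : A.IsProfileFun w h) (u v u' v' : Q × ℕ)
    (hu : A.Edge' w h u u') (hv : A.Edge' w h v v') (hlev : u.2 = v.2) :
    (ProfLt (h u) (h v) → ProfLt (h u') (h v')) ∧
    (h u = h v → A.acc u'.1 = A.acc v'.1 → h u' = h v') ∧
    (h u = h v → A.acc v'.1 = true → A.acc u'.1 = false → ProfLt (h u') (h v')) := by
  rw [hprof.profile_eq_of_edge' hu, hprof.profile_eq_of_edge' hv]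
  refine ⟨fun hlt => ?_, fun heq hacc => by rw [heq, hacc], fun heq hv' hu' => ?_⟩
  · refine List.append_lt_append_of_length_eq ?_ hlt _ _
    rw [hprof.length_eq hu.1.1, hprof.length_eq hv.1.1, hlev]
  · rw [heq, hv', hu']
    exact List.Lex.append_left _ (List.Lex.rel Bool.false_lt_true) _
end

section
/- G has an accepting path if and only if G'' contains infinitely many F-nodes, where G'' is obtained from G' by removing all nodes with only finitely many descendants in G'. -/
/-!
Along a `G'`-edge the maximal profile grows by the label of the target, so the profile of a node
is the sequence of labels of any `G'`-path from level 0 to it. Call `β : ℕ → Bool` a branch if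
each prefix of `β` is the maximal profile of some node. The nodes realizing the prefixes of a
branch are all reached by `G'`-paths from finitely many level-0 nodes, so by König's lemma they
contain an infinite `G'`-path; it lies in `G''` and carries the labels `β`. Distinct branches
are realized by distinct nodes of a common level, so there are at most `|Q|` of them.

If `G''` has infinitely many F-nodes, then each of them lies on a branch that is `true` at its
level, and by pigeonhole one branch is `true` infinitely often; its path is accepting.
Conversely, along an accepting path the maximal profiles increase lexicographically, so their
prefixes stabilize and converge to a branch. Were this branch eventually `false`, a later
F-node of the path would have a maximal profile that is lexicographically at most the branch,
agrees with it before the `false` tail, and ends in `true`, which is impossible.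
-/

open Filter Relation

namespace List

variable {α : Type*} [LinearOrder α]

lemma lt_of_take_lt_take {a b : List α} {k : ℕ} (h : a.take k < b.take k) : a < b := by
  induction k generalizing a b with
  | zero => simp at h
  | succ k ih =>
    match a, b with
    | [], [] => simp at h
    | [], _ :: _ => exact Lex.nil
    | _ :: _, [] => simp at h
    | x :: a, y :: b =>
      rw [take_succ_cons, take_succ_cons] at h
      cases h with
      | cons h => exact Lex.cons (ih h)
      | rel h => exact Lex.rel h

lemma take_le_take_of_le {a b : List α} (h : a ≤ b) (k : ℕ) : a.take k ≤ b.take k :=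
  not_lt.1 fun hlt => not_lt.2 h (lt_of_take_lt_take hlt)

lemma append_lt_append_of_lt_of_length_eq {a b : List α} (hab : a < b)
    (hlen : a.length = b.length) (c d : List α) : a ++ c < b ++ d := by
  induction hab with
  | nil => simp at hlen
  | cons _ ih => exact Lex.cons (ih (by simpa using hlen))
  | rel h => exact Lex.rel h

lemma le_of_append_le_append_of_length_eq {a b c d : List α} (h : a ++ c ≤ b ++ d)
    (hlen : a.length = b.length) : a ≤ b :=
  not_lt.1 fun hba => not_lt.2 h (append_lt_append_of_lt_of_length_eq hba hlen.symm d c)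

end List

theorem Monotone.exists_eventually_eq_of_finite_range {α : Type*} [PartialOrder α]
    {f : ℕ → α} (hf : Monotone f) (hfin : (Set.range f).Finite) :
    ∃ a, ∀ᶠ n in atTop, f n = a := by
  obtain ⟨_, ⟨n₀, rfl⟩, hmax⟩ := hfin.exists_maximal (Set.range_nonempty f)
  refine ⟨f n₀, eventually_atTop.2 ⟨n₀, fun n hn => ?_⟩⟩
  exact (hmax ⟨n, rfl⟩ (hf hn)).antisymm (hf hn)

section Konig

variable {α : Type*} {r : α → α → Prop}

lemma exists_rel_infinite_reflTransGen {a : α} (hfin : {b | r a b}.Finite)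
    (ha : {b | ReflTransGen r a b}.Infinite) :
    ∃ b, r a b ∧ {c | ReflTransGen r b c}.Infinite := by
  by_contra! hb
  refine ha (((hfin.biUnion fun b hab => hb b hab).insert a).subset fun c hc => ?_)
  rcases hc.cases_head with rfl | ⟨b, hab, hbc⟩
  · exact Set.mem_insert _ _
  · exact Set.mem_insert_of_mem _ (Set.mem_biUnion hab hbc)

/-- König's lemma for a finitely branching relation. -/
theorem exists_seq_of_infinite_reflTransGen (hfin : ∀ a, {b | r a b}.Finite) {a : α}
    (ha : {b | ReflTransGen r a b}.Infinite) :
    ∃ f : ℕ → α, f 0 = a ∧ ∀ n, r (f n) (f (n + 1)) := by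
  choose next hnext hnext_inf using fun b : {b // {c | ReflTransGen r b c}.Infinite} =>
    exists_rel_infinite_reflTransGen (hfin b) b.2
  let f : ℕ → {b // {c | ReflTransGen r b c}.Infinite} :=
    Nat.rec ⟨a, ha⟩ fun _ b => ⟨next b, hnext_inf b⟩
  exact ⟨fun n => (f n).1, rfl, fun n => hnext (f n)⟩

lemma reflTransGen_of_seq {f : ℕ → α} (hf : ∀ n, r (f n) (f (n + 1))) (n : ℕ) :
    ReflTransGen r (f 0) (f n) := by
  induction n with
  | zero => exact .refl
  | succ n ih => exact ih.tail (hf n)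

end Konig

section SeqPrefix

/-- `NBW.profileOf p n` is `seqPrefix (fun j => A.acc (p j)) n` by definition. -/
def seqPrefix (β : ℕ → Bool) (n : ℕ) : List Bool := (List.range (n + 1)).map β

@[simp] lemma seqPrefix_length (β : ℕ → Bool) (n : ℕ) : (seqPrefix β n).length = n + 1 := by
  simp [seqPrefix]

lemma seqPrefix_succ (β : ℕ → Bool) (n : ℕ) :
    seqPrefix β (n + 1) = seqPrefix β n ++ [β (n + 1)] := by
  simp [seqPrefix, List.range_succ]

lemma take_seqPrefix {β : ℕ → Bool} {j n : ℕ} (hjn : j ≤ n) :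
    (seqPrefix β n).take (j + 1) = seqPrefix β j := by
  rw [seqPrefix, ← List.map_take, List.take_range, Nat.min_eq_left (by omega), seqPrefix]

lemma apply_eq_of_seqPrefix_eq {α β : ℕ → Bool} {n : ℕ}
    (h : seqPrefix α n = seqPrefix β n) : α n = β n :=
  List.map_inj_left.1 h n (by simp)

lemma eventually_injOn_seqPrefix (t : Finset (ℕ → Bool)) :
    ∀ᶠ M in atTop, Set.InjOn (seqPrefix · M) t := by
  have hpair : ∀ β ∈ t, ∀ β' ∈ t,
      ∀ᶠ M in atTop, seqPrefix β M = seqPrefix β' M → β = β' := by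
    intro β _ β' _
    by_cases hββ' : β = β'
    · exact Eventually.of_forall fun _ _ => hββ'
    obtain ⟨j, hj⟩ := Function.ne_iff.1 hββ'
    filter_upwards [eventually_ge_atTop j] with M hjM hM
    refine absurd (apply_eq_of_seqPrefix_eq ?_) hj
    rw [← take_seqPrefix hjM, hM, take_seqPrefix hjM]
  filter_upwards [(eventually_all_finset t).2 fun β hβ =>
    (eventually_all_finset t).2 (hpair β hβ)] with M hM β hβ β' hβ' using hM β hβ β' hβ'

lemma exists_seqPrefix_eq_of_isPrefix {r : ℕ → List Bool} (hlen : ∀ j, (r j).length = j + 1)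
    (hr : ∀ j, r j <+: r (j + 1)) : ∃ β : ℕ → Bool, ∀ j, r j = seqPrefix β j := by
  refine ⟨fun j => (r j).getD j false, fun j => ?_⟩
  induction j with
  | zero =>
    match h0 : r 0, hlen 0 with
    | [b], _ => simp [seqPrefix, h0]
  | succ j ih =>
    obtain ⟨t, ht⟩ := hr j
    obtain ⟨b, rfl⟩ : ∃ b, t = [b] := by
      have := congrArg List.length ht
      rw [List.length_append, hlen, hlen] at this
      exact List.length_eq_one_iff.1 (by omega)
    rw [seqPrefix_succ, ← ih, ← ht]
    simp [← hlen j]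

lemma exists_eventually_take_eq_seqPrefix {q : ℕ → List Bool} (hlen : ∀ n, n < (q n).length)
    (hq : ∀ k, Monotone fun n => (q n).take k) :
    ∃ β : ℕ → Bool, ∀ j, ∀ᶠ n in atTop, (q n).take (j + 1) = seqPrefix β j := by
  have hstab (k : ℕ) : ∃ r, ∀ᶠ n in atTop, (q n).take k = r :=
    (hq k).exists_eventually_eq_of_finite_range <|
      (List.finite_length_le Bool k).subset <| Set.range_subset_iff.2 fun n => by simp
  choose r hr using hstab
  have hr' (j : ℕ) : ∃ n, j ≤ n ∧ (q n).take (j + 1) = r (j + 1) ∧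
      (q n).take (j + 2) = r (j + 2) :=
    ((eventually_ge_atTop j).and ((hr (j + 1)).and (hr (j + 2)))).exists
  have hlen_r (j : ℕ) : (r (j + 1)).length = j + 1 := by
    obtain ⟨n, hjn, hn, -⟩ := hr' j
    have := hlen n
    rw [← hn, List.length_take]
    omega
  have hprefix_r (j : ℕ) : r (j + 1) <+: r (j + 2) := by
    obtain ⟨n, -, hn, hn'⟩ := hr' j
    exact hn ▸ hn' ▸ List.take_prefix_take_left (by omega)
  obtain ⟨β, hβ⟩ := exists_seqPrefix_eq_of_isPrefix hlen_r hprefix_r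
  exact ⟨β, fun j => (hr (j + 1)).mono fun n hn => hn.trans (hβ j)⟩

lemma seqPrefix_eq_of_le_of_eq_false {γ β : ℕ → Bool} {N n : ℕ} (hNn : N ≤ n)
    (hle : seqPrefix γ n ≤ seqPrefix β n) (hN : seqPrefix γ N = seqPrefix β N)
    (hβ : ∀ i, N < i → β i = false) : seqPrefix γ n = seqPrefix β n := by
  induction n, hNn using Nat.le_induction with
  | base => exact hN
  | succ n hNn ih =>
    rw [seqPrefix_succ, seqPrefix_succ] at hle ⊢
    have hn := ih (List.le_of_append_le_append_of_length_eq hle (by simp))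
    rw [hn, hβ (n + 1) (by omega)] at hle ⊢
    cases hγ : γ (n + 1)
    · rfl
    · rw [hγ] at hle
      exact absurd hle (not_le.2 (List.append_left_lt (List.Lex.rel rfl)))

end SeqPrefix

namespace NBW

variable {Q σ : Type} {A : NBW Q σ} {w : ℕ → σ} {h : Q × ℕ → List Bool}

lemma InDag.mem_init {v : Q × ℕ} (hv : A.InDag w v) (hv0 : v.2 = 0) : v.1 ∈ A.init := by
  obtain ⟨p, hp0, -, hpv⟩ := hv
  rwa [← hpv, hv0]

lemma FinRunTo.exists_snoc {p : ℕ → Q} {u v : Q × ℕ} (hp : A.FinRunTo w p u)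
    (huv : A.Edge w u v) :
    ∃ p', A.FinRunTo w p' v ∧ A.profileOf p' v.2 = A.profileOf p u.2 ++ [A.acc v.1] := by
  obtain ⟨hp0, hstep, hpu⟩ := hp
  obtain ⟨-, hv2, htrans⟩ := huv
  let p' j := if j ≤ u.2 then p j else v.1
  refine ⟨p', ⟨by simp [p', hp0], fun j hj => ?_, by simp [p', hv2]⟩, ?_⟩
  · rcases (show j < u.2 ∨ j = u.2 by omega) with hj | rfl
    · simpa [p', hj.le, Nat.succ_le_of_lt hj] using hstep j hj
    · simpa [p', hpu] using htrans
  · have hpre : A.profileOf p' u.2 = A.profileOf p u.2 :=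
      List.map_congr_left fun j hj => by simp [p', Nat.lt_succ_iff.1 (List.mem_range.1 hj)]
    rw [hv2, show A.profileOf p' (u.2 + 1) = A.profileOf p' u.2 ++ [A.acc (p' (u.2 + 1))] from
      seqPrefix_succ _ _, hpre]
    simp [p']

lemma Edge.inDag_right {u v : Q × ℕ} (huv : A.Edge w u v) : A.InDag w v := by
  obtain ⟨p, hp⟩ : ∃ p, A.FinRunTo w p u := huv.1
  obtain ⟨p', hp', -⟩ := hp.exists_snoc huv
  exact ⟨p', hp'⟩

lemma FinRunTo.edge_pred {p : ℕ → Q} {v : Q × ℕ} {n : ℕ} (hp : A.FinRunTo w p v)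
    (hn : v.2 = n + 1) : A.FinRunTo w p (p n, n) ∧ A.Edge w (p n, n) v := by
  obtain ⟨hp0, hstep, hpv⟩ := hp
  have hrun : A.FinRunTo w p (p n, n) := ⟨hp0, fun j hj => hstep j (by omega), rfl⟩
  exact ⟨hrun, ⟨p, hrun⟩, hn, by simpa [← hpv, hn] using hstep n (by omega)⟩

lemma snd_of_edge_seq {f : ℕ → Q × ℕ} (hf : ∀ n, A.Edge w (f n) (f (n + 1))) (n : ℕ) :
    (f n).2 = (f 0).2 + n := by
  induction n with
  | zero => rfl
  | succ n ih => rw [(hf n).2.1, ih, Nat.add_assoc]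

lemma inDag_of_edge_seq {f : ℕ → Q × ℕ} (hf : ∀ n, A.Edge w (f n) (f (n + 1))) :
    ∀ n, A.InDag w (f n)
  | 0 => (hf 0).1
  | n + 1 => (hf n).inDag_right

lemma finite_setOf_snd_eq [Finite Q] (n : ℕ) : {v : Q × ℕ | v.2 = n}.Finite :=
  (Set.finite_range fun q : Q => (q, n)).subset fun v hv => ⟨v.1, Prod.ext rfl hv.symm⟩

lemma finite_setOf_edge [Finite Q] (u : Q × ℕ) : {v | A.Edge w u v}.Finite :=
  (finite_setOf_snd_eq (u.2 + 1)).subset fun _ huv => huv.2.1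

lemma exists_edge'_pred [Finite Q] {v : Q × ℕ} {n : ℕ} (hv : A.InDag w v) (hn : v.2 = n + 1) :
    ∃ u, A.Edge' w h u v := by
  obtain ⟨p, hp⟩ : ∃ p, A.FinRunTo w p v := hv
  have hfin : {u | A.Edge w u v}.Finite :=
    (finite_setOf_snd_eq n).subset fun u hu => by have := hu.2.1; show u.2 = n; omega
  obtain ⟨u, hu, hmax⟩ := hfin.exists_maximalFor h _ ⟨_, (hp.edge_pred hn).2⟩
  exact ⟨u, hu, fun u' hu' hlt => not_le.2 hlt (hmax hu' (le_of_lt hlt))⟩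

lemma exists_reflTransGen_edge' [Finite Q] {v : Q × ℕ} {n : ℕ} (hv : A.InDag w v)
    (hn : n ≤ v.2) : ∃ u, A.InDag w u ∧ u.2 = n ∧ ReflTransGen (A.Edge' w h) u v := by
  obtain ⟨d, hd⟩ := Nat.exists_eq_add_of_le hn
  clear hn
  induction d generalizing v with
  | zero => exact ⟨v, hv, by omega, .refl⟩
  | succ d ih =>
    obtain ⟨u, huv⟩ := exists_edge'_pred (h := h) hv hd
    obtain ⟨x, hx, hxn, hxu⟩ := ih huv.1.1 (by have := huv.1.2.1; omega)
    exact ⟨x, hx, hxn, hxu.tail huv⟩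

lemma inDag''_of_seq {f : ℕ → Q × ℕ} (hf : ∀ n, A.Edge' w h (f n) (f (n + 1))) (n : ℕ) :
    A.InDag'' w h (f n) := by
  have hlevel := snd_of_edge_seq fun n => (hf n).1
  refine ⟨(hf n).1.1, fun hfin => Set.infinite_range_of_injective (f := fun m => f (n + m))
    (fun a b hab => ?_) (hfin.subset (Set.range_subset_iff.2 ?_))⟩
  · have := congrArg Prod.snd hab
    dsimp only at this
    rw [hlevel (n + a), hlevel (n + b)] at this
    omega
  · exact reflTransGen_of_seq (f := fun m => f (n + m)) fun m => hf (n + m)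

lemma exists_seq_of_inDag'' [Finite Q] {v : Q × ℕ} (hv : A.InDag'' w h v) :
    ∃ f : ℕ → Q × ℕ, f 0 = v ∧ ∀ n, A.Edge' w h (f n) (f (n + 1)) :=
  exists_seq_of_infinite_reflTransGen
    (fun u => (finite_setOf_edge u).subset fun _ huv => huv.1) hv.2

def branchSet (A : NBW Q σ) (w : ℕ → σ) (h : Q × ℕ → List Bool) : Set (ℕ → Bool) :=
  {β | ∀ n, ∃ v, A.InDag w v ∧ v.2 = n ∧ h v = seqPrefix β n}

def BranchEdge (A : NBW Q σ) (w : ℕ → σ) (h : Q × ℕ → List Bool) (β : ℕ → Bool)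
    (u v : Q × ℕ) : Prop :=
  A.Edge' w h u v ∧ h v = seqPrefix β v.2

lemma branchSet_finite [Finite Q] : (A.branchSet w h).Finite := by
  by_contra hinf
  obtain ⟨t, ht, htcard⟩ := Set.Infinite.exists_subset_card_eq hinf (Nat.card Q + 1)
  obtain ⟨M, hM⟩ := (eventually_injOn_seqPrefix t).exists
  choose g hg using fun β : t => ht β.2 M
  have hinj : Function.Injective fun β : t => (g β).1 := fun β β' hββ' => by
    have hg' : g β = g β' := Prod.ext hββ' ((hg β).2.1.trans (hg β').2.1.symm)
    exact Subtype.ext (hM β.2 β'.2 ((hg β).2.2.symm.trans (hg' ▸ (hg β').2.2)))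
  have := Nat.card_le_card_of_injective _ hinj
  simp only [Nat.card_eq_fintype_card, Fintype.card_coe] at this
  omega

section Profile

variable (hprof : A.IsProfileFun w h)

include hprof

lemma exists_maxProfile_eq_seqPrefix {v : Q × ℕ} (hv : A.InDag w v) :
    ∃ γ, h v = seqPrefix γ v.2 := by
  obtain ⟨⟨p, -, hpv⟩, -⟩ := hprof v hv
  exact ⟨_, hpv.symm⟩

lemma length_maxProfile {v : Q × ℕ} (hv : A.InDag w v) : (h v).length = v.2 + 1 := by
  obtain ⟨γ, hγ⟩ := exists_maxProfile_eq_seqPrefix hprof hv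
  rw [hγ, seqPrefix_length]

lemma acc_eq_of_maxProfile_eq_seqPrefix {v : Q × ℕ} (hv : A.InDag w v) {β : ℕ → Bool}
    (hβ : h v = seqPrefix β v.2) : A.acc v.1 = β v.2 := by
  obtain ⟨⟨p, hp, hpv⟩, -⟩ := hprof v hv
  rw [← hp.2.2]
  exact apply_eq_of_seqPrefix_eq (hpv.trans hβ)

lemma maxProfile_append_le_of_edge {u v : Q × ℕ} (huv : A.Edge w u v) :
    h u ++ [A.acc v.1] ≤ h v := by
  obtain ⟨⟨p, hp, hpu⟩, -⟩ := hprof u huv.1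
  obtain ⟨p', hp', hp'v⟩ := hp.exists_snoc huv
  rw [← hpu, ← hp'v]
  exact (hprof v huv.inDag_right).2 p' hp'

lemma maxProfile_eq_append_of_edge' {u v : Q × ℕ} (huv : A.Edge' w h u v) :
    h v = h u ++ [A.acc v.1] := by
  obtain ⟨⟨p, hp, hpv⟩, -⟩ := hprof v huv.1.inDag_right
  obtain ⟨hpu', hu'v⟩ := hp.edge_pred huv.1.2.1
  have hle : A.profileOf p u.2 ≤ h u :=
    le_trans ((hprof _ ⟨p, hpu'⟩).2 p hpu') (not_lt.1 (huv.2 _ hu'v))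
  have hv : h v = A.profileOf p u.2 ++ [A.acc v.1] := by
    rw [← hpv, huv.1.2.1, ← hp.2.2, huv.1.2.1]
    exact seqPrefix_succ _ _
  have hge := maxProfile_append_le_of_edge hprof huv.1
  rw [hv] at hge ⊢
  rw [hle.antisymm (List.le_of_append_le_append_of_length_eq hge
    (by rw [length_maxProfile hprof huv.1.1]; exact (seqPrefix_length _ _).symm))]

lemma maxProfile_eq_take_of_reflTransGen {u v : Q × ℕ} (huv : ReflTransGen (A.Edge' w h) u v)
    (hu : A.InDag w u) : h u = (h v).take (u.2 + 1) := by
  rw [← length_maxProfile hprof hu, ← List.prefix_iff_eq_take]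
  induction huv with
  | refl => exact List.prefix_rfl
  | tail _ hbc ih =>
    exact ih.trans (maxProfile_eq_append_of_edge' hprof hbc ▸ List.prefix_append _ _)

lemma monotone_take_maxProfile_of_edge_seq {f : ℕ → Q × ℕ}
    (hf : ∀ n, A.Edge w (f n) (f (n + 1))) (k : ℕ) : Monotone fun n => (h (f n)).take k :=
  monotone_nat_of_le_succ fun n =>
    (not_lt.1 ((List.prefix_append _ _).take k).le).trans
      (List.take_le_take_of_le (maxProfile_append_le_of_edge hprof (hf n)) k)

lemma reflTransGen_branchEdge_of_reflTransGen_edge' {u v : Q × ℕ}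
    (huv : ReflTransGen (A.Edge' w h) u v) {β : ℕ → Bool} (hv : h v = seqPrefix β v.2) :
    h u = seqPrefix β u.2 ∧ ReflTransGen (A.BranchEdge w h β) u v := by
  induction huv with
  | refl => exact ⟨hv, .refl⟩
  | tail _ hbc ih =>
    have hb := hv
    rw [maxProfile_eq_append_of_edge' hprof hbc, hbc.1.2.1, seqPrefix_succ] at hb
    obtain ⟨hu, hub⟩ := ih (List.append_inj_left' hb rfl)
    exact ⟨hu, hub.tail ⟨hbc, hv⟩⟩

variable [Finite Q]

lemma mem_branchSet_of_take {β : ℕ → Bool}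
    (hβ : ∀ j, ∃ u, A.InDag w u ∧ j ≤ u.2 ∧ (h u).take (j + 1) = seqPrefix β j) :
    β ∈ A.branchSet w h := by
  intro j
  obtain ⟨u, hu, hju, huβ⟩ := hβ j
  obtain ⟨x, hx, rfl, hxu⟩ := exists_reflTransGen_edge' hu hju
  exact ⟨x, hx, rfl, (maxProfile_eq_take_of_reflTransGen hprof hxu hx).trans huβ⟩

lemma exists_mem_branchSet_of_edge_seq {f : ℕ → Q × ℕ}
    (hf : ∀ n, A.Edge w (f n) (f (n + 1))) : ∃ β ∈ A.branchSet w h,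
      ∀ j, ∀ᶠ n in atTop, (h (f n)).take (j + 1) = seqPrefix β j := by
  have hlevel := snd_of_edge_seq hf
  have hlen (n : ℕ) : (h (f n)).length = (f 0).2 + n + 1 := by
    rw [length_maxProfile hprof (inDag_of_edge_seq hf n), hlevel]
  obtain ⟨β, hβ⟩ := exists_eventually_take_eq_seqPrefix (fun n => by rw [hlen]; omega)
    (monotone_take_maxProfile_of_edge_seq hprof hf)
  refine ⟨β, mem_branchSet_of_take hprof fun j => ?_, hβ⟩
  obtain ⟨n, hn, hjn⟩ := ((hβ j).and (eventually_ge_atTop j)).exists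
  exact ⟨f n, inDag_of_edge_seq hf n, by rw [hlevel]; omega, hn⟩

lemma exists_mem_branchSet_of_inDag'' {v : Q × ℕ} (hv : A.InDag'' w h v) :
    ∃ β ∈ A.branchSet w h, h v = seqPrefix β v.2 := by
  obtain ⟨f, rfl, hf⟩ := exists_seq_of_inDag'' hv
  obtain ⟨β, hβB, hβ⟩ := exists_mem_branchSet_of_edge_seq hprof fun n => (hf n).1
  obtain ⟨n, hn⟩ := (hβ (f 0).2).exists
  exact ⟨β, hβB,
    (maxProfile_eq_take_of_reflTransGen hprof (reflTransGen_of_seq hf n) hv.1).trans hn⟩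

lemma exists_infinite_reflTransGen_branchEdge {β : ℕ → Bool} (hβ : β ∈ A.branchSet w h) :
    ∃ u, A.InDag w u ∧ u.2 = 0 ∧ h u = seqPrefix β 0 ∧
      {v | ReflTransGen (A.BranchEdge w h β) u v}.Infinite := by
  by_contra! hfin
  choose g hg using hβ
  have hroots : {u | A.InDag w u ∧ u.2 = 0 ∧ h u = seqPrefix β 0}.Finite :=
    (finite_setOf_snd_eq 0).subset fun u hu => hu.2.1
  refine Set.infinite_range_of_injective (f := g) (fun m n hmn => ?_)
    ((hroots.biUnion fun u hu => hfin u hu.1 hu.2.1 hu.2.2).subset ?_)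
  · simpa [(hg m).2.1, (hg n).2.1] using congrArg Prod.snd hmn
  rintro _ ⟨n, rfl⟩
  obtain ⟨u, hu, hu0, hun⟩ := exists_reflTransGen_edge' (h := h) (hg n).1 (Nat.zero_le _)
  obtain ⟨huβ, hun⟩ :=
    reflTransGen_branchEdge_of_reflTransGen_edge' hprof hun ((hg n).2.2.trans (by rw [(hg n).2.1]))
  exact Set.mem_biUnion ⟨hu, hu0, hu0 ▸ huβ⟩ hun

lemma exists_seq_of_mem_branchSet {β : ℕ → Bool} (hβ : β ∈ A.branchSet w h) :
    ∃ f : ℕ → Q × ℕ, A.IsPath (A.Edge' w h) f ∧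
      ∀ n, (f n).2 = n ∧ A.InDag'' w h (f n) ∧ A.acc (f n).1 = β n := by
  obtain ⟨u, hu, hu0, huβ, huinf⟩ := exists_infinite_reflTransGen_branchEdge hprof hβ
  obtain ⟨f, rfl, hf⟩ := exists_seq_of_infinite_reflTransGen
    (fun a => (finite_setOf_edge a).subset fun _ hab => hab.1.1) huinf
  have hlevel (n : ℕ) : (f n).2 = n := by
    rw [snd_of_edge_seq (fun n => (hf n).1.1), hu0, Nat.zero_add]
  have hβf : ∀ n, h (f n) = seqPrefix β (f n).2
    | 0 => by rw [hu0]; exact huβ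
    | n + 1 => (hf n).2
  refine ⟨f, ⟨hu.mem_init hu0, hu0, fun n => (hf n).1⟩, fun n =>
    ⟨hlevel n, inDag''_of_seq (fun n => (hf n).1) n, ?_⟩⟩
  rw [acc_eq_of_maxProfile_eq_seqPrefix hprof (inDag_of_edge_seq (fun n => (hf n).1.1) n) (hβf n),
    hlevel]

lemma exists_mem_branchSet_frequently_of_acceptingPath {π : ℕ → Q × ℕ}
    (hπ : A.AcceptingPath (A.Edge w) π) :
    ∃ β ∈ A.branchSet w h, ∃ᶠ n in atTop, β n = true := by
  obtain ⟨⟨-, hπ0, hπ⟩, hacc⟩ := hπ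
  have hlevel (n : ℕ) : (π n).2 = n := by rw [snd_of_edge_seq hπ, hπ0, Nat.zero_add]
  obtain ⟨β, hβB, hβ⟩ := exists_mem_branchSet_of_edge_seq hprof hπ
  refine ⟨β, hβB, not_not.1 fun hfin => ?_⟩
  obtain ⟨N, hN⟩ := eventually_atTop.1 (not_frequently.1 hfin)
  obtain ⟨n, hn, hNn, hnN⟩ :=
    ((frequently_atTop.2 hacc).and_eventually ((eventually_ge_atTop N).and (hβ N))).exists
  obtain ⟨γ, hγ⟩ := exists_maxProfile_eq_seqPrefix hprof (inDag_of_edge_seq hπ n)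
  rw [hlevel] at hγ
  have hle : seqPrefix γ n ≤ seqPrefix β n := by
    obtain ⟨m, hm, hnm⟩ := ((hβ n).and (eventually_ge_atTop n)).exists
    rw [← hm, ← take_seqPrefix (le_refl n), ← hγ]
    exact monotone_take_maxProfile_of_edge_seq hprof hπ _ hnm
  have hγN : seqPrefix γ N = seqPrefix β N := by rw [← take_seqPrefix hNn, ← hγ, hnN]
  have hγβ := seqPrefix_eq_of_le_of_eq_false hNn hle hγN fun i hi => by simpa using hN i hi.le
  have hacc_n := acc_eq_of_maxProfile_eq_seqPrefix hprof (inDag_of_edge_seq hπ n)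
    (hγ.trans (hγβ.trans (by rw [hlevel])))
  rw [hn, hlevel] at hacc_n
  exact hN n hNn hacc_n.symm

lemma exists_mem_branchSet_frequently_of_infinite
    (hS : {v : Q × ℕ | A.InDag'' w h v ∧ A.acc v.1 = true}.Infinite) :
    ∃ β ∈ A.branchSet w h, ∃ᶠ n in atTop, β n = true := by
  by_contra hB
  have hfin : (⋃ β ∈ A.branchSet w h, {n | β n = true}).Finite :=
    branchSet_finite.biUnion fun β hβ =>
      Set.not_infinite.1 fun hinf => hB ⟨β, hβ, Nat.frequently_atTop_iff_infinite.2 hinf⟩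
  refine hS ((Set.finite_univ.prod hfin).subset fun v ⟨hv, hacc⟩ => ?_)
  obtain ⟨β, hβ, hvβ⟩ := exists_mem_branchSet_of_inDag'' hprof hv
  exact ⟨trivial, Set.mem_biUnion hβ
    ((acc_eq_of_maxProfile_eq_seqPrefix hprof hv.1 hvβ).symm.trans hacc)⟩

end Profile

end NBW

/-- `G` has an accepting path iff `G''` has infinitely many F-nodes. -/
theorem stmt7 {Q σ : Type} [Finite Q] (A : NBW Q σ) (w : ℕ → σ) (h : Q × ℕ → List Bool)
    (hprof : A.IsProfileFun w h) :
    (∃ π : ℕ → Q × ℕ, A.AcceptingPath (A.Edge w) π) ↔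
    Set.Infinite {v : Q × ℕ | A.InDag'' w h v ∧ A.acc v.1 = true} := by
  constructor
  · rintro ⟨π, hπ⟩
    obtain ⟨β, hβB, hβ⟩ := NBW.exists_mem_branchSet_frequently_of_acceptingPath hprof hπ
    obtain ⟨f, -, hf⟩ := NBW.exists_seq_of_mem_branchSet hprof hβB
    have hinj : Function.Injective f := fun m n hmn => by
      simpa [(hf m).1, (hf n).1] using congrArg Prod.snd hmn
    refine ((Nat.frequently_atTop_iff_infinite.1 hβ).image hinj.injOn).mono ?_
    rintro _ ⟨n, hn, rfl⟩
    exact ⟨(hf n).2.1, (hf n).2.2.trans hn⟩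
  · intro hS
    obtain ⟨β, hβB, hβ⟩ := NBW.exists_mem_branchSet_frequently_of_infinite hprof hS
    obtain ⟨f, hpath, hf⟩ := NBW.exists_seq_of_mem_branchSet hprof hβB
    refine ⟨f, ⟨hpath.1, hpath.2.1, fun n => (hpath.2.2 n).1⟩, fun N => ?_⟩
    simpa only [(hf _).2.2] using frequently_atTop.1 hβ N
end

section
/- The k-retrospective ranking r^k is monotone with respect to the profile preorder within a level: for nodes u, u' on the same level, if h_u < h_{u'} then r^k(u) ≥ r^k(u'). -/
/-! Every ⊤-class above `h u'` on the common level is also above `h u`, so `α(u') ≤ α(u)`. When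
`u'` is itself ⊤-labeled, its own class counts for `α(u)` but not for `α(u')`, so `α(u') < α(u)`,
which absorbs the `+1` that the ⊤-label adds to the rank of `u'`. -/

theorem profLt_trans {a b c : List Bool} (hab : ProfLt a b) (hbc : ProfLt b c) : ProfLt a c :=
  List.lt_trans hab hbc

theorem profLt_irrefl (a : List Bool) : ¬ ProfLt a a :=
  List.lt_irrefl a

namespace NBW

variable {Q σ : Type} (A : NBW Q σ) (w : ℕ → σ) (h : Q × ℕ → List Bool) (lam : Q × ℕ → Bool)

def alphaClasses (u : Q × ℕ) : Set (List Bool) :=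
  {p | ∃ v, A.InDag w v ∧ v.2 = u.2 ∧ lam v = true ∧ h v = p ∧ ProfLt (h u) p}

theorem alphaClasses_finite [Finite Q] (u : Q × ℕ) : (A.alphaClasses w h lam u).Finite := by
  refine (Set.finite_range fun q : Q => h (q, u.2)).subset ?_
  rintro _ ⟨v, -, hv, -, rfl, -⟩
  exact ⟨v.1, by rw [← hv]⟩

variable {u u' : Q × ℕ}

theorem alphaClasses_subset_of_profLt (hlev : u.2 = u'.2) (hlt : ProfLt (h u) (h u')) :
    A.alphaClasses w h lam u' ⊆ A.alphaClasses w h lam u := by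
  rintro _ ⟨v, hv, hv2, hvl, rfl, hvlt⟩
  exact ⟨v, hv, hv2.trans hlev.symm, hvl, rfl, profLt_trans hlt hvlt⟩

theorem alphaClasses_ssubset_of_profLt (hu' : A.InDag w u') (hl' : lam u' = true)
    (hlev : u.2 = u'.2) (hlt : ProfLt (h u) (h u')) :
    A.alphaClasses w h lam u' ⊂ A.alphaClasses w h lam u := by
  have hnotMem : h u' ∉ A.alphaClasses w h lam u' := fun ⟨_, _, _, _, hv, hlt'⟩ =>
    profLt_irrefl _ (hv ▸ hlt')
  exact ⟨A.alphaClasses_subset_of_profLt w h lam hlev hlt,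
    fun hsup => hnotMem (hsup ⟨u', hu', hlev.symm, hl', rfl, hlt⟩)⟩

theorem alphaCount_le_of_profLt [Finite Q] (hlev : u.2 = u'.2) (hlt : ProfLt (h u) (h u')) :
    A.alphaCount w h lam u' ≤ A.alphaCount w h lam u :=
  Set.ncard_le_ncard (A.alphaClasses_subset_of_profLt w h lam hlev hlt)
    (A.alphaClasses_finite w h lam u)

theorem alphaCount_lt_of_profLt [Finite Q] (hu' : A.InDag w u') (hl' : lam u' = true)
    (hlev : u.2 = u'.2) (hlt : ProfLt (h u) (h u')) :
    A.alphaCount w h lam u' < A.alphaCount w h lam u :=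
  Set.ncard_lt_ncard (A.alphaClasses_ssubset_of_profLt w h lam hu' hl' hlev hlt)
    (A.alphaClasses_finite w h lam u)

end NBW

theorem stmt13_general {Q σ : Type} [Fintype Q] (A : NBW Q σ) (w : ℕ → σ) (h : Q × ℕ → List Bool)
    (k : ℕ) (lam : Q × ℕ → Bool)
    (u u' : Q × ℕ) (hu' : A.InDag w u') (hlev : u.2 = u'.2)
    (hlt : ProfLt (h u) (h u')) :
    A.retroRank w h lam k (A.mBound) u' ≤ A.retroRank w h lam k (A.mBound) u := by
  have hle := A.alphaCount_le_of_profLt w h lam hlev hlt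
  unfold NBW.retroRank
  rw [← hlev]
  split_ifs with _ hl'
  · rfl
  · omega
  · have := A.alphaCount_lt_of_profLt w h lam hu' hl' hlev hlt
    omega
  all_goals omega

/-- the `k`-retrospective ranking is monotone w.r.t. the profile
preorder within a level. -/
theorem stmt13 {Q σ : Type} [Fintype Q] (A : NBW Q σ) (w : ℕ → σ) (h : Q × ℕ → List Bool)
    (hprof : A.IsProfileFun w h) (k : ℕ) (lam : Q × ℕ → Bool)
    (hlam : A.IsRetroLabeling w h k lam)
    (u u' : Q × ℕ) (hu : A.InDag w u) (hu' : A.InDag w u') (hlev : u.2 = u'.2)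
    (hlt : ProfLt (h u) (h u')) :
    A.retroRank w h lam k (A.mBound) u' ≤ A.retroRank w h lam k (A.mBound) u :=
  stmt13_general A w h k lam u u' hu' hlev hlt
end
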